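/- arXiv:1712.01480 — 2 statements merged into one kernel-verified Lean document; each statement's English description precedes it below -/
import Mathlib

section
/- For α = 0, m ≥ 0, and J = {ℓ_1,...,ℓ_j} ⊆ {1,...,n} with 0 ≤ j ≤ n−1, the module V_n^0(m,J) is cyclic over U(gl(n)), generated by x_{ℓ_1}^{-1}···x_{ℓ_j}^{-1} x_t^{m+j} for any t ∈ {1,...,n} \ J. -/
open Finsupp

/-- The space of Laurent polynomials `L_n = ℂ[x₁^{±1},...,xₙ^{±1}]`,
realized as finitely supported functions from exponent vectors to ℂ.
The monomial `x^k` is `Finsupp.single k 1`. -/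
abbrev Lmon (n : ℕ) : Type := (Fin n → ℤ) →₀ ℂ

/-- The α-twisted action of the matrix unit `E_{ab}` on `L_n`:
`E_{ab} · x^k = (k_b + α_b) x^{k + e_a - e_b}`. -/
noncomputable def Eab {n : ℕ} (α : Fin n → ℂ) (a b : Fin n) :
    Lmon n →ₗ[ℂ] Lmon n :=
  Finsupp.lsum ℂ (fun k => ((k b : ℂ) + α b) •
    Finsupp.lsingle (fun i => k i + (if i = a then 1 else 0) - (if i = b then 1 else 0)))

open scoped Classical in
/-- `V_n^α(m, J)`: the span of monomials `x^k` of total degree `m` such that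
`{ℓ ∈ I_α : k_ℓ < 0} ⊆ J`, where `I_α = {ℓ : α_ℓ = 0}`. -/
noncomputable def Vmod {n : ℕ} (α : Fin n → ℂ) (m : ℤ) (J : Finset (Fin n)) :
    Submodule ℂ (Lmon n) :=
  Submodule.span ℂ {f | ∃ k : Fin n → ℤ, f = Finsupp.single k (1 : ℂ) ∧
    (∑ i, k i) = m ∧ ∀ ℓ, α ℓ = 0 → k ℓ < 0 → ℓ ∈ J}

open scoped Classical in
/-- `L_n^α(m, j)`: the span of monomials `x^k` of total degree `m` with
`|{ℓ ∈ I_α : k_ℓ < 0}| ≤ j`  (the index `j` is an integer so that `j = -1`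
gives the zero module). -/
noncomputable def LmodJ {n : ℕ} (α : Fin n → ℂ) (m j : ℤ) : Submodule ℂ (Lmon n) :=
  Submodule.span ℂ {f | ∃ k : Fin n → ℤ, f = Finsupp.single k (1 : ℂ) ∧
    (∑ i, k i) = m ∧
    ((Finset.univ.filter (fun ℓ => α ℓ = 0 ∧ k ℓ < 0)).card : ℤ) ≤ j}

/-- A subspace of `L_n` is a `𝔤𝔩(n)`-submodule (equivalently a `U(𝔤𝔩(n))`-submodule)
iff it is invariant under all the operators `E_{ab}`. -/
def glInv {n : ℕ} (α : Fin n → ℂ) (p : Submodule ℂ (Lmon n)) : Prop :=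
  ∀ a b : Fin n, ∀ f ∈ p, Eab α a b f ∈ p

/-- The `U(𝔤𝔩(n))`-submodule of `L_n^α` generated by `f`: the smallest subspace
containing `f` that is invariant under all `E_{ab}`. -/
noncomputable def genMod {n : ℕ} (α : Fin n → ℂ) (f : Lmon n) : Submodule ℂ (Lmon n) :=
  sInf {p | f ∈ p ∧ glInv α p}

lemma Eab_single {n : ℕ} (α : Fin n → ℂ) (a b : Fin n) (k : Fin n → ℤ) :
    Eab α a b (Finsupp.single k 1) = ((k b : ℂ) + α b) •
      Finsupp.single (fun i => k i + (if i = a then 1 else 0) - (if i = b then 1 else 0)) (1 : ℂ) := by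
  simp [Eab, Finsupp.lsum_single, Finsupp.lsingle_apply]

open scoped Classical in
lemma Vmod_glInv {n : ℕ} (m : ℤ) (J : Finset (Fin n)) :
    glInv (0 : Fin n → ℂ) (Vmod 0 m J) := by
  intro a b f hf
  refine Submodule.span_induction (p := fun f _ => Eab (0 : Fin n → ℂ) a b f ∈ Vmod 0 m J)
    ?_ ?_ ?_ ?_ hf
  · rintro f ⟨k, rfl, hsum, hneg⟩
    rw [Eab_single]
    by_cases hkb : (k b : ℂ) = 0
    · simp only [Pi.zero_apply, add_zero, hkb, zero_smul]
      exact Submodule.zero_mem _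
    · have hkbZ : k b ≠ 0 := fun h => hkb (by exact_mod_cast h)
      have h1 : ∑ i, (k i + (if i = a then 1 else 0) - (if i = b then 1 else 0)) = m := by
        simp [Finset.sum_sub_distrib, Finset.sum_add_distrib, Finset.sum_ite_eq', hsum]
      have h2 : ∀ ℓ, (0 : Fin n → ℂ) ℓ = 0 →
          (k ℓ + (if ℓ = a then 1 else 0) - (if ℓ = b then 1 else 0)) < 0 → ℓ ∈ J := by
        intro ℓ _ hℓ
        split_ifs at hℓ with ha1 ha2 ha2
        · exact hneg ℓ rfl (by omega)
        · exact hneg ℓ rfl (by omega)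
        · have hne : k ℓ ≠ 0 := by rw [ha2]; exact hkbZ
          exact hneg ℓ rfl (by omega)
        · exact hneg ℓ rfl (by omega)
      apply Submodule.smul_mem
      apply Submodule.subset_span
      exact ⟨_, rfl, h1, h2⟩
  · simp
  · intro x y _ _ hx hy
    rw [map_add]; exact Submodule.add_mem _ hx hy
  · intro c x _ hx
    rw [map_smul]; exact Submodule.smul_mem _ _ hx
/-- For `α = 0`, `m ≥ 0` and `|J| ≤ n−1`, `V_n^0(m,J)` is cyclic, generated by
`x_{ℓ₁}^{-1} ⋯ x_{ℓⱼ}^{-1} x_t^{m+j}` for any `t ∉ J`. -/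
theorem stmt_9 (n : ℕ) (m : ℤ) (hm : 0 ≤ m)
    (J : Finset (Fin n)) (hJ : J.card ≤ n - 1)
    (t : Fin n) (ht : t ∉ J) :
    genMod (0 : Fin n → ℂ) (Finsupp.single
      (fun i => if i ∈ J then (-1 : ℤ) else if i = t then m + J.card else 0) (1 : ℂ)) =
      Vmod (0 : Fin n → ℂ) m J := by
  classical
  set k0 : Fin n → ℤ :=
    (fun i => if i ∈ J then (-1 : ℤ) else if i = t then m + J.card else 0) with hk0
  have hk0t : k0 t = m + J.card := by simp [hk0, ht]
  have hk0sum : ∑ i, k0 i = m := by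
    have hcong : ∀ i, k0 i = (if i ∈ J then (-1 : ℤ) else 0) + (if i = t then m + J.card else 0) := by
      intro i
      rcases eq_or_ne i t with rfl | hit
      · simp [hk0, ht]
      · simp only [hk0, hit, if_false, add_zero]
    rw [Finset.sum_congr rfl (fun i _ => hcong i), Finset.sum_add_distrib]
    rw [Finset.sum_ite_mem, Finset.univ_inter, Finset.sum_const, Finset.sum_ite_eq']
    simp
    try ring
  have hk0neg : ∀ ℓ, k0 ℓ < 0 → ℓ ∈ J := by
    intro ℓ hℓ
    by_contra hℓJ
    rcases eq_or_ne ℓ t with rfl | hlt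
    · rw [hk0t] at hℓ
      have : (0:ℤ) ≤ (J.card : ℤ) := Int.natCast_nonneg _
      omega
    · simp [hk0, hℓJ, hlt] at hℓ
  have hgen_mem : Finsupp.single k0 (1 : ℂ) ∈ genMod (0 : Fin n → ℂ) (Finsupp.single k0 1) :=
    Submodule.mem_sInf.2 fun p hp => hp.1
  have hgen_inv : glInv (0 : Fin n → ℂ) (genMod (0 : Fin n → ℂ) (Finsupp.single k0 1)) :=
    fun a b f hf => Submodule.mem_sInf.2 fun p hp => hp.2 a b f (Submodule.mem_sInf.1 hf p hp)
  apply le_antisymm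
  · exact sInf_le ⟨Submodule.subset_span ⟨k0, rfl, hk0sum, fun ℓ _ h => hk0neg ℓ h⟩,
      Vmod_glInv m J⟩
  · rw [Vmod, Submodule.span_le]
    rintro f ⟨k, rfl, hsum, hneg⟩
    have key : ∀ N : ℕ, ∀ k : Fin n → ℤ, (∑ i, (k i - k0 i).toNat) = N →
        (∑ i, k i) = m → (∀ ℓ, k ℓ < 0 → ℓ ∈ J) →
        Finsupp.single k (1 : ℂ) ∈ genMod (0 : Fin n → ℂ) (Finsupp.single k0 1) := by
      intro N
      induction N using Nat.strong_induction_on with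
      | _ N ih =>
        intro k hd hsum hneg
        by_cases hN : N = 0
        · have h1 : ∀ i, k i ≤ k0 i := by
            intro i
            have := Finset.sum_eq_zero_iff.1 (hd.trans hN) i (Finset.mem_univ i)
            omega
          have h2 : ∑ i, (k0 i - k i) = 0 := by
            rw [Finset.sum_sub_distrib, hsum, hk0sum]; ring
          have h3 : ∀ i ∈ Finset.univ, k0 i - k i = 0 :=
            (Finset.sum_eq_zero_iff_of_nonneg (fun i _ => by have := h1 i; omega)).1 h2
          have hkk : k = k0 := funext fun i => by have := h3 i (Finset.mem_univ i); omega
          rwa [hkk]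
        · have ha : ∃ a, k0 a < k a := by
            by_contra h
            push_neg at h
            apply hN
            rw [← hd]
            exact Finset.sum_eq_zero fun i _ => by have := h i; omega
          obtain ⟨a, ha⟩ := ha
          have hb : ∃ b, k b < k0 b := by
            by_contra h
            push_neg at h
            have h2 : ∑ i, (k i - k0 i) = 0 := by
              rw [Finset.sum_sub_distrib, hsum, hk0sum]; ring
            have h3 := (Finset.sum_eq_zero_iff_of_nonneg
              (fun i _ => by have := h i; omega)).1 h2 a (Finset.mem_univ a)
            omega
          obtain ⟨b, hb⟩ := hb
          have hab : a ≠ b := fun h => by rw [h] at ha; omega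
          set kk : Fin n → ℤ :=
            (fun i => k i - (if i = a then 1 else 0) + (if i = b then 1 else 0)) with hkk
          have hkka : kk a = k a - 1 := by simp [hkk, hab]
          have hkkb : kk b = k b + 1 := by simp [hkk, Ne.symm hab]
          have hsum2 : ∑ i, kk i = m := by
            simp [hkk, Finset.sum_sub_distrib, Finset.sum_add_distrib,
              Finset.sum_ite_eq', hsum]
          have hneg2 : ∀ ℓ, kk ℓ < 0 → ℓ ∈ J := by
            intro ℓ hℓ
            rcases eq_or_ne ℓ a with rfl | hla
            · rw [hkka] at hℓ
              exact hk0neg ℓ (by omega)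
            · rcases eq_or_ne ℓ b with rfl | hlb
              · rw [hkkb] at hℓ
                exact hneg ℓ (by omega)
              · simp only [hkk, hla, hlb, if_false, sub_zero, add_zero] at hℓ
                exact hneg ℓ hℓ
          have hb0 : kk b ≠ 0 := by
            rw [hkkb]
            by_cases hbJ : b ∈ J
            · have : k0 b = -1 := by simp [hk0, hbJ]
              omega
            · have : ¬ k b < 0 := fun h => hbJ (hneg b h)
              omega
          have hd2 : ∑ i, (kk i - k0 i).toNat < N := by
            rw [← hd]
            apply Finset.sum_lt_sum (f := fun i => (kk i - k0 i).toNat)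
            · intro i _
              rcases eq_or_ne i a with rfl | hia
              · rw [hkka]; omega
              · rcases eq_or_ne i b with rfl | hib
                · rw [hkkb]; omega
                · simp [hkk, hia, hib]
            · exact ⟨a, Finset.mem_univ a, by rw [hkka]; omega⟩
          have hmem2 := ih _ hd2 kk rfl hsum2 hneg2
          have hstep := hgen_inv a b _ hmem2
          rw [Eab_single] at hstep
          have hkk3 : (fun i => kk i + (if i = a then 1 else 0) - (if i = b then 1 else 0))
              = k := by
            funext i
            simp only [hkk]
            split_ifs <;> omega
          rw [hkk3] at hstep
          have hc : ((kk b : ℂ)) ≠ 0 := Int.cast_ne_zero.2 hb0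
          have hz : ((kk b : ℂ) + (0 : Fin n → ℂ) b) = (kk b : ℂ) := by simp
          rw [hz] at hstep
          have hfin := Submodule.smul_mem _ ((kk b : ℂ))⁻¹ hstep
          rwa [smul_smul, inv_mul_cancel₀ hc, one_smul] at hfin
    exact key _ k rfl hsum (fun ℓ h => hneg ℓ rfl h)
end

section
/- If α ≠ 0 (with 0 ≤ Re(α_ℓ) < 1 for all ℓ), then V_n^α(m,∅) = L_n^α(m,0) is a nonzero simple U(gl(n))-module for every m ∈ Z. -/
open Finsupp

/-!
Both `V_n^α(m,∅)` and `L_n^α(m,0)` are the span of the monomials `x^k` of degree `m` with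
`k_ℓ ≥ 0` on `I_α` (the admissible exponents). The diagonal operators `E_{ℓℓ}` act on `x^k` by
`k_ℓ + α_ℓ`, so they separate monomials and every nonzero submodule contains one. The operator
`E_{ab}` sends `x^k` to `(k_b + α_b) x^{k+e_a-e_b}`, and since `0 ≤ Re α_b < 1` this coefficient
vanishes only when `α_b = 0 = k_b`. Fixing `a₀` with `α_{a₀} ≠ 0`, unit moves between `a₀` and
the other coordinates therefore lead from every admissible exponent to `m e_{a₀}` and back.
-/

section

variable {n : ℕ} {α : Fin n → ℂ} {p : Submodule ℂ (Lmon n)}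

def shiftExp (k : Fin n → ℤ) (a b : Fin n) : Fin n → ℤ :=
  fun i => k i + (if i = a then 1 else 0) - (if i = b then 1 else 0)

lemma shiftExp_self (k : Fin n → ℤ) (a : Fin n) : shiftExp k a a = k := by
  funext i; simp [shiftExp]

lemma shiftExp_shiftExp (k : Fin n → ℤ) (a b : Fin n) :
    shiftExp (shiftExp k a b) b a = k := by
  funext i; simp only [shiftExp]; ring

lemma sum_shiftExp (k : Fin n → ℤ) (a b : Fin n) :
    ∑ i, shiftExp k a b i = ∑ i, k i := by
  simp [shiftExp, Finset.sum_add_distrib, Finset.sum_sub_distrib]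

lemma Eab_single_s14 (a b : Fin n) (k : Fin n → ℤ) (c : ℂ) :
    Eab α a b (single k c) = ((k b : ℂ) + α b) • single (shiftExp k a b) c := by
  rw [Eab, lsum_single]
  rfl

lemma Eab_self_apply (ℓ : Fin n) (f : Lmon n) (k : Fin n → ℤ) :
    Eab α ℓ ℓ f k = ((k ℓ : ℂ) + α ℓ) * f k := by
  induction f using Finsupp.induction_linear with
  | zero => simp
  | add f g hf hg => simp [hf, hg, mul_add]
  | single k' c =>
    rw [Eab_single_s14, shiftExp_self]
    by_cases h : k' = k <;> simp [h]

lemma single_mem_of_mem_support (hp : glInv α p) {f : Lmon n} (hf : f ∈ p) {k : Fin n → ℤ}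
    (hk : k ∈ f.support) : single k (1 : ℂ) ∈ p := by
  induction h : f.support.card using Nat.strong_induction_on generalizing f with
  | _ N ih =>
  by_cases hsub : f.support ⊆ {k}
  · rw [support_subset_singleton.mp hsub] at hf
    simpa [smul_single, inv_mul_cancel₀ (mem_support_iff.mp hk)] using p.smul_mem (f k)⁻¹ hf
  obtain ⟨k₂, hk₂, hk₂k⟩ := Finset.not_subset.mp hsub
  obtain ⟨ℓ, hℓ⟩ : ∃ ℓ, k₂ ℓ ≠ k ℓ := Function.ne_iff.mp (Finset.notMem_singleton.mp hk₂k)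
  -- `g` kills the monomial `x^{k₂}` and keeps `x^k`
  set g : Lmon n := Eab α ℓ ℓ f - ((k₂ ℓ : ℂ) + α ℓ) • f
  have hg : g ∈ p := p.sub_mem (hp ℓ ℓ f hf) (p.smul_mem _ hf)
  have hg_apply (k' : Fin n → ℤ) : g k' = ((k' ℓ : ℂ) - k₂ ℓ) * f k' := by
    simp only [g, Finsupp.sub_apply, Finsupp.smul_apply, Eab_self_apply, smul_eq_mul]; ring
  have hg_support : g.support ⊆ f.support.erase k₂ := by
    intro x hx
    rw [mem_support_iff, hg_apply] at hx
    exact Finset.mem_erase.mpr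
      ⟨by rintro rfl; simp at hx, mem_support_iff.mpr (right_ne_zero_of_mul hx)⟩
  refine ih _ ?_ hg ?_ rfl
  · exact h ▸ (Finset.card_le_card hg_support).trans_lt (Finset.card_erase_lt_of_mem hk₂)
  · rw [mem_support_iff, hg_apply]
    exact mul_ne_zero (sub_ne_zero.mpr (by exact_mod_cast hℓ.symm)) (mem_support_iff.mp hk)

lemma intCast_add_eq_zero_iff {c : ℂ} (hc₀ : 0 ≤ c.re) (hc₁ : c.re < 1) {z : ℤ} :
    (z : ℂ) + c = 0 ↔ z = 0 ∧ c = 0 := by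
  refine ⟨fun h => ?_, fun ⟨hz, hc⟩ => by simp [hz, hc]⟩
  have hre : (z : ℝ) + c.re = 0 := by simpa using congrArg Complex.re h
  have hz : z = 0 := by
    have : (-1 : ℤ) < z := by exact_mod_cast (by linarith : (-1 : ℝ) < z)
    have : z ≤ 0 := by exact_mod_cast (by linarith : (z : ℝ) ≤ 0)
    omega
  subst hz
  exact ⟨rfl, by simpa using h⟩

lemma single_shiftExp_mem (hp : glInv α p) {k : Fin n → ℤ} (hk : single k (1 : ℂ) ∈ p)
    (a b : Fin n) (hc : (k b : ℂ) + α b ≠ 0) : single (shiftExp k a b) (1 : ℂ) ∈ p := by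
  have := p.smul_mem ((k b : ℂ) + α b)⁻¹ (hp a b _ hk)
  rwa [Eab_single_s14, smul_smul, inv_mul_cancel₀ hc, one_smul] at this

lemma single_mem_iff_single_shiftExp_mem (hp : glInv α p) {k : Fin n → ℤ} {a b : Fin n}
    (hb : (k b : ℂ) + α b ≠ 0) (ha : (shiftExp k a b a : ℂ) + α a ≠ 0) :
    single k (1 : ℂ) ∈ p ↔ single (shiftExp k a b) (1 : ℂ) ∈ p :=
  ⟨fun h => single_shiftExp_mem hp h a b hb,
    fun h => shiftExp_shiftExp k a b ▸ single_shiftExp_mem hp h b a ha⟩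

def Admissible (α : Fin n → ℂ) (m : ℤ) (k : Fin n → ℤ) : Prop :=
  ∑ i, k i = m ∧ ∀ ℓ, α ℓ = 0 → 0 ≤ k ℓ

lemma Admissible.shiftExp {m : ℤ} {k : Fin n → ℤ} (hk : Admissible α m k) (a : Fin n)
    {b : Fin n} (hb : α b = 0 → 0 < k b) : Admissible α m (shiftExp k a b) := by
  refine ⟨(sum_shiftExp k a b).trans hk.1, fun ℓ hℓ => ?_⟩
  have := hk.2 ℓ hℓ
  by_cases hℓb : ℓ = b
  · subst hℓb
    have := hb hℓ
    simp only [_root_.shiftExp]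
    split_ifs <;> omega
  · simp only [_root_.shiftExp, if_neg hℓb]
    split_ifs <;> omega

lemma admissible_piSingle {a₀ : Fin n} (ha₀ : α a₀ ≠ 0) (m : ℤ) :
    Admissible α m (Pi.single a₀ m) := by
  refine ⟨by simp, fun ℓ hℓ => ?_⟩
  rw [Pi.single_eq_of_ne (fun h => ha₀ (h ▸ hℓ) : ℓ ≠ a₀)]

lemma eq_piSingle_of_forall_ne {k : Fin n → ℤ} {a₀ : Fin n} {m : ℤ}
    (hsum : ∑ i, k i = m) (h : ∀ b ≠ a₀, k b = 0) : k = Pi.single a₀ m := by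
  funext i
  by_cases hi : i = a₀
  · subst hi
    rw [Pi.single_eq_same, ← hsum, Finset.sum_eq_single i (fun b _ hb => h b hb) (by simp)]
  · rw [Pi.single_eq_of_ne hi, h i hi]

def offMass (a₀ : Fin n) (k : Fin n → ℤ) : ℕ :=
  ∑ c ∈ Finset.univ.erase a₀, (k c).natAbs

lemma offMass_lt {a₀ b : Fin n} (hb : b ≠ a₀) {k k' : Fin n → ℤ}
    (heq : ∀ c, c ≠ a₀ → c ≠ b → k' c = k c) (hlt : (k' b).natAbs < (k b).natAbs) :
    offMass a₀ k' < offMass a₀ k := by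
  refine Finset.sum_lt_sum (fun c hc => ?_) ⟨b, Finset.mem_erase.mpr ⟨hb, Finset.mem_univ b⟩, hlt⟩
  by_cases hcb : c = b
  · exact hcb ▸ hlt.le
  · rw [heq c (Finset.mem_erase.mp hc).1 hcb]

theorem single_mem_iff_single_piSingle_mem (hα : ∀ ℓ, 0 ≤ (α ℓ).re ∧ (α ℓ).re < 1)
    {a₀ : Fin n} (ha₀ : α a₀ ≠ 0) (hp : glInv α p) {m : ℤ} {k : Fin n → ℤ}
    (hk : Admissible α m k) :
    single k (1 : ℂ) ∈ p ↔ single (Pi.single a₀ m) (1 : ℂ) ∈ p := by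
  have hcoeff (ℓ : Fin n) (z : ℤ) (h : z ≠ 0 ∨ α ℓ ≠ 0) : (z : ℂ) + α ℓ ≠ 0 := fun h0 => by
    have := (intCast_add_eq_zero_iff (hα ℓ).1 (hα ℓ).2).mp h0
    tauto
  induction h : offMass a₀ k using Nat.strong_induction_on generalizing k with
  | _ N ih =>
  by_cases hk0 : ∀ b ≠ a₀, k b = 0
  · rw [eq_piSingle_of_forall_ne hk.1 hk0]
  push Not at hk0
  obtain ⟨b, hb, hkb⟩ := hk0
  rcases hkb.lt_or_gt with hneg | hpos
  · -- move a unit from `a₀` to `b`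
    have hαb : α b ≠ 0 := fun h0 => by have := hk.2 b h0; omega
    rw [single_mem_iff_single_shiftExp_mem hp (hcoeff _ _ (.inr ha₀)) (hcoeff _ _ (.inr hαb))]
    refine ih _ (h ▸ offMass_lt hb (fun c hca hcb => ?_) ?_) (hk.shiftExp b (by tauto)) rfl
    · simp [shiftExp, hca, hcb]
    · simp only [shiftExp, if_pos, if_neg hb]; omega
  · -- move a unit from `b` to `a₀`
    rw [single_mem_iff_single_shiftExp_mem hp (hcoeff _ _ (.inl hkb)) (hcoeff _ _ (.inr ha₀))]
    refine ih _ (h ▸ offMass_lt hb (fun c hca hcb => ?_) ?_) (hk.shiftExp a₀ fun _ => hpos) rfl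
    · simp [shiftExp, hca, hcb]
    · simp only [shiftExp, if_pos, if_neg hb]; omega

lemma Vmod_empty_eq_supported (α : Fin n → ℂ) (m : ℤ) :
    Vmod α m ∅ = supported ℂ ℂ {k | Admissible α m k} := by
  rw [Vmod, supported_eq_span_single]
  congr 1
  ext f
  simp only [Set.mem_ofPred_eq, Set.mem_image, Admissible, Finset.notMem_empty, imp_false, not_lt]
  grind

lemma LmodJ_zero_eq_supported (α : Fin n → ℂ) (m : ℤ) :
    LmodJ α m 0 = supported ℂ ℂ {k | Admissible α m k} := by
  rw [LmodJ, supported_eq_span_single]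
  congr 1
  ext f
  simp only [Set.mem_ofPred_eq, Set.mem_image, Admissible, Nat.cast_nonpos, Finset.card_eq_zero,
    Finset.filter_eq_empty_iff, Finset.mem_univ, true_implies, not_and, not_lt]
  grind

end

/-- For `α ≠ 0`, `V_n^α(m,∅) = L_n^α(m,0)` is a nonzero simple
`U(𝔤𝔩(n))`-module for every `m ∈ ℤ`. -/
theorem stmt_14 (n : ℕ) (α : Fin n → ℂ)
    (hα : ∀ ℓ, 0 ≤ (α ℓ).re ∧ (α ℓ).re < 1) (hα0 : α ≠ 0) (m : ℤ) :
    Vmod α m ∅ = LmodJ α m 0 ∧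
    Vmod α m ∅ ≠ ⊥ ∧
    ∀ p : Submodule ℂ (Lmon n), glInv α p → p ≤ Vmod α m ∅ → p ≠ ⊥ →
      p = Vmod α m ∅ := by
  obtain ⟨a₀, ha₀⟩ : ∃ a₀, α a₀ ≠ 0 := Function.ne_iff.mp hα0
  rw [Vmod_empty_eq_supported, LmodJ_zero_eq_supported]
  refine ⟨rfl, fun hbot => ?_, fun p hp hle hne => le_antisymm hle ?_⟩
  · have := single_mem_supported ℂ (s := {k | Admissible α m k}) (1 : ℂ)
      (admissible_piSingle ha₀ m)
    simp [hbot] at this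
  · obtain ⟨f, hf, hf0⟩ := Submodule.exists_mem_ne_zero_of_ne_bot hne
    obtain ⟨k, hk⟩ := support_nonempty_iff.mpr hf0
    have hbase : single (Pi.single a₀ m) (1 : ℂ) ∈ p :=
      (single_mem_iff_single_piSingle_mem hα ha₀ hp (hle hf hk)).mp
        (single_mem_of_mem_support hp hf hk)
    rw [supported_eq_span_single, Submodule.span_le]
    rintro _ ⟨k', hk', rfl⟩
    exact (single_mem_iff_single_piSingle_mem hα ha₀ hp hk').mpr hbase
end
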